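/- arXiv:1401.3684 — 5 statements merged into one kernel-verified Lean document; each statement's English description precedes it below -/
import Mathlib

section
/- Under the EIM recursion, for all 1 ≤ m ≤ d one has q_m(x_m) = 1, and q_m(x_l) = 0 whenever 1 ≤ l < m ≤ d. Consequently, for each 1 ≤ k ≤ d the matrix B^(k) ∈ ℂ^{k×k} with entries B^(k)_{l,m} = q_m(x_l) is lower triangular with unit diagonal, and hence invertible. -/
/-!
Each `q_m` is a residual normalised by its value at `x_m`, so `q_m(x_m) = 1`. For `l < m`
the interpolant `I_{m-1} g` reproduces `g` at the interpolation point `x_l`, so the residual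
defining `q_m` vanishes there. Hence every `B^(k)` is lower triangular with unit diagonal,
and its determinant is `1`.
-/

open Matrix

theorem Matrix.IsLowerTriangular.isUnit_iff {n R : Type*} [Fintype n] [DecidableEq n]
    [LinearOrder n] [CommRing R] {M : Matrix n n R} (hM : M.IsLowerTriangular) :
    IsUnit M ↔ ∀ i, IsUnit (M i i) := by
  rw [isUnit_iff_isUnit_det, det_of_isLowerTriangular M hM, IsUnit.prod_univ_iff]

theorem isUnit_submatrix_castLE_of_unitriangular {R Ω : Type*} [CommRing R] {d : ℕ}
    {x : Fin d → Ω} {q : Fin d → Ω → R} (hdiag : ∀ m, q m (x m) = 1)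
    (hlower : ∀ l m : Fin d, l < m → q m (x l) = 0) {k : ℕ} (hk : k ≤ d) :
    IsUnit ((Matrix.of fun l m => q m (x l)).submatrix (Fin.castLE hk) (Fin.castLE hk)) := by
  have htri : ((Matrix.of fun l m => q m (x l)).submatrix (Fin.castLE hk)
      (Fin.castLE hk)).IsLowerTriangular :=
    fun l m hlm => hlower _ _ ((Fin.castLE_lt_castLE_iff hk).mpr hlm)
  rw [htri.isUnit_iff]
  exact fun m => by simp only [submatrix_apply, of_apply, hdiag, isUnit_one]

section EIM

variable {P Ω : Type*} {g : P → Ω → ℂ} {d : ℕ} {x : Fin d → Ω} {μ : Fin d → P}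
  {q : Fin d → Ω → ℂ} {lam : ℕ → P → Fin d → ℂ}

theorem eim_basis_apply_self (hd : 1 ≤ d) (h0 : g (μ ⟨0, hd⟩) (x ⟨0, hd⟩) ≠ 0)
    (hq0 : ∀ y : Ω, q ⟨0, hd⟩ y = g (μ ⟨0, hd⟩) y / g (μ ⟨0, hd⟩) (x ⟨0, hd⟩))
    (hres : ∀ k, 1 ≤ k → ∀ hk : k < d,
      g (μ ⟨k, hk⟩) (x ⟨k, hk⟩) -
        ∑ m : Fin d, (if (m : ℕ) < k then lam k (μ ⟨k, hk⟩) m * q m (x ⟨k, hk⟩) else 0) ≠ 0)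
    (hqk : ∀ k, 1 ≤ k → ∀ (hk : k < d) (y : Ω),
      q ⟨k, hk⟩ y =
        (g (μ ⟨k, hk⟩) y -
          ∑ m : Fin d, (if (m : ℕ) < k then lam k (μ ⟨k, hk⟩) m * q m y else 0)) /
        (g (μ ⟨k, hk⟩) (x ⟨k, hk⟩) -
          ∑ m : Fin d, (if (m : ℕ) < k then lam k (μ ⟨k, hk⟩) m * q m (x ⟨k, hk⟩) else 0)))
    (m : Fin d) : q m (x m) = 1 := by
  obtain ⟨k, hk⟩ := m
  rcases Nat.eq_zero_or_pos k with rfl | hk1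
  · rw [hq0, div_self h0]
  · rw [hqk k hk1 hk, div_self (hres k hk1 hk)]

theorem eim_basis_apply_of_lt
    (hlam : ∀ k, 1 ≤ k → k < d → ∀ (p : P) (l : Fin d), (l : ℕ) < k →
      ∑ m : Fin d, (if (m : ℕ) < k then q m (x l) * lam k p m else 0) = g p (x l))
    (hqk : ∀ k, 1 ≤ k → ∀ (hk : k < d) (y : Ω),
      q ⟨k, hk⟩ y =
        (g (μ ⟨k, hk⟩) y -
          ∑ m : Fin d, (if (m : ℕ) < k then lam k (μ ⟨k, hk⟩) m * q m y else 0)) /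
        (g (μ ⟨k, hk⟩) (x ⟨k, hk⟩) -
          ∑ m : Fin d, (if (m : ℕ) < k then lam k (μ ⟨k, hk⟩) m * q m (x ⟨k, hk⟩) else 0)))
    {l m : Fin d} (hlm : l < m) : q m (x l) = 0 := by
  obtain ⟨k, hk⟩ := m
  have hk1 : 1 ≤ k := Nat.one_le_of_lt hlm
  have hinterp : ∑ j : Fin d, (if (j : ℕ) < k then lam k (μ ⟨k, hk⟩) j * q j (x l) else 0) =
      g (μ ⟨k, hk⟩) (x l) := by
    rw [← hlam k hk1 hk (μ ⟨k, hk⟩) l hlm]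
    simp only [mul_comm]
  rw [hqk k hk1 hk, hinterp, sub_self, zero_div]

end EIM

theorem stmt1_general {P Ω : Type*}
    (g : P → Ω → ℂ) (d : ℕ) (hd : 1 ≤ d)
    (x : Fin d → Ω) (μ : Fin d → P) (q : Fin d → Ω → ℂ)
    (lam : ℕ → P → Fin d → ℂ)
    -- initialization of the recursion
    (h0 : g (μ ⟨0, hd⟩) (x ⟨0, hd⟩) ≠ 0)
    (hq0 : ∀ y : Ω, q ⟨0, hd⟩ y = g (μ ⟨0, hd⟩) y / g (μ ⟨0, hd⟩) (x ⟨0, hd⟩))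
    -- for 1 ≤ k < d, λ(μ) solves the k×k linear system with matrix B^(k)_{l,m} = q_m(x_l)
    (hlam : ∀ k, 1 ≤ k → k < d → ∀ (p : P) (l : Fin d), (l : ℕ) < k →
      ∑ m : Fin d, (if (m : ℕ) < k then q m (x l) * lam k p m else 0) = g p (x l))
    -- the residual δ_k g = g - I_k g is nonzero at (μ_{k+1}, x_{k+1})
    (hres : ∀ k (hk1 : 1 ≤ k) (hk : k < d),
      g (μ ⟨k, hk⟩) (x ⟨k, hk⟩) -
        ∑ m : Fin d, (if (m : ℕ) < k then lam k (μ ⟨k, hk⟩) m * q m (x ⟨k, hk⟩) else 0) ≠ 0)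
    -- q_{k+1} is the normalized residual
    (hqk : ∀ k (hk1 : 1 ≤ k) (hk : k < d) (y : Ω),
      q ⟨k, hk⟩ y =
        (g (μ ⟨k, hk⟩) y -
          ∑ m : Fin d, (if (m : ℕ) < k then lam k (μ ⟨k, hk⟩) m * q m y else 0)) /
        (g (μ ⟨k, hk⟩) (x ⟨k, hk⟩) -
          ∑ m : Fin d, (if (m : ℕ) < k then lam k (μ ⟨k, hk⟩) m * q m (x ⟨k, hk⟩) else 0))) :
    (∀ m : Fin d, q m (x m) = 1) ∧
    (∀ l m : Fin d, l < m → q m (x l) = 0) ∧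
    (∀ k (hk1 : 1 ≤ k) (hk : k ≤ d),
      (∀ l m : Fin k, l < m → q (Fin.castLE hk m) (x (Fin.castLE hk l)) = 0) ∧
      (∀ m : Fin k, q (Fin.castLE hk m) (x (Fin.castLE hk m)) = 1) ∧
      IsUnit (Matrix.of fun l m : Fin k => q (Fin.castLE hk m) (x (Fin.castLE hk l)))) := by
  have hdiag : ∀ m, q m (x m) = 1 := eim_basis_apply_self hd h0 hq0 hres hqk
  have hlower : ∀ l m : Fin d, l < m → q m (x l) = 0 :=
    fun _ _ hlm => eim_basis_apply_of_lt hlam hqk hlm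
  exact ⟨hdiag, hlower, fun k _ hk =>
    ⟨fun l m hlm => hlower _ _ ((Fin.castLE_lt_castLE_iff hk).mpr hlm), fun m => hdiag _,
      isUnit_submatrix_castLE_of_unitriangular hdiag hlower hk⟩⟩

/-- Under the EIM recursion, `q m (x m) = 1` and `q m (x l) = 0` for `l < m`; consequently
each matrix `B^(k)` with entries `B^(k)_{l,m} = q m (x l)` is lower triangular with unit
diagonal, hence invertible. -/
theorem stmt1 {P Ω : Type*} [Nonempty P] [Nonempty Ω]
    (g : P → Ω → ℂ) (d : ℕ) (hd : 1 ≤ d)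
    (x : Fin d → Ω) (μ : Fin d → P) (q : Fin d → Ω → ℂ)
    (lam : ℕ → P → Fin d → ℂ)
    -- initialization of the recursion
    (h0 : g (μ ⟨0, hd⟩) (x ⟨0, hd⟩) ≠ 0)
    (hq0 : ∀ y : Ω, q ⟨0, hd⟩ y = g (μ ⟨0, hd⟩) y / g (μ ⟨0, hd⟩) (x ⟨0, hd⟩))
    -- for 1 ≤ k < d, λ(μ) solves the k×k linear system with matrix B^(k)_{l,m} = q_m(x_l)
    (hlam : ∀ k, 1 ≤ k → k < d → ∀ (p : P) (l : Fin d), (l : ℕ) < k →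
      ∑ m : Fin d, (if (m : ℕ) < k then q m (x l) * lam k p m else 0) = g p (x l))
    -- the residual δ_k g = g - I_k g is nonzero at (μ_{k+1}, x_{k+1})
    (hres : ∀ k (hk1 : 1 ≤ k) (hk : k < d),
      g (μ ⟨k, hk⟩) (x ⟨k, hk⟩) -
        ∑ m : Fin d, (if (m : ℕ) < k then lam k (μ ⟨k, hk⟩) m * q m (x ⟨k, hk⟩) else 0) ≠ 0)
    -- q_{k+1} is the normalized residual
    (hqk : ∀ k (hk1 : 1 ≤ k) (hk : k < d) (y : Ω),
      q ⟨k, hk⟩ y =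
        (g (μ ⟨k, hk⟩) y -
          ∑ m : Fin d, (if (m : ℕ) < k then lam k (μ ⟨k, hk⟩) m * q m y else 0)) /
        (g (μ ⟨k, hk⟩) (x ⟨k, hk⟩) -
          ∑ m : Fin d, (if (m : ℕ) < k then lam k (μ ⟨k, hk⟩) m * q m (x ⟨k, hk⟩) else 0))) :
    (∀ m : Fin d, q m (x m) = 1) ∧
    (∀ l m : Fin d, l < m → q m (x l) = 0) ∧
    (∀ k (hk1 : 1 ≤ k) (hk : k ≤ d),
      (∀ l m : Fin k, l < m → q (Fin.castLE hk m) (x (Fin.castLE hk l)) = 0) ∧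
      (∀ m : Fin k, q (Fin.castLE hk m) (x (Fin.castLE hk m)) = 1) ∧
      IsUnit (Matrix.of fun l m : Fin k => q (Fin.castLE hk m) (x (Fin.castLE hk l)))) :=
  stmt1_general g d hd x μ q lam h0 hq0 hlam hres hqk
end

section
/- (Inductive step of Lemma 1.) Fix 1 ≤ k < d and suppose Γ^(k) ∈ ℂ^{k×k} satisfies Σ_{m=1}^k Γ^(k)_{l,m} q_m(x) = g(μ_l, x) for all 1 ≤ l ≤ k and all x ∈ Ω. Define Γ^(k+1) ∈ ℂ^{(k+1)×(k+1)} by: Γ^(k+1)_{l,m} = Γ^(k)_{l,m} for l,m ≤ k; Γ^(k+1)_{l,k+1} = 0 for l ≤ k; Γ^(k+1)_{k+1,k+1} = (δ_k g)(μ_{k+1}, x_{k+1}); and Γ^(k+1)_{k+1,l} = κ_l for l ≤ k, where κ ∈ ℂ^k is the unique solution of Σ_{m=1}^k B^(k)_{l,m} κ_m = g(μ_{k+1}, x_l) for all 1 ≤ l ≤ k. Then Σ_{m=1}^{k+1} Γ^(k+1)_{l,m} q_m(x) = g(μ_l, x) for all 1 ≤ l ≤ k+1 and all x ∈ Ω.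 -/
/-! Rows `l ≤ k` of `Γ^(k+1)` are those of `Γ^(k)` padded with a zero. For the last row,
uniqueness of `κ` identifies it with `λ(μ_{k+1})`, so that row sums to
`(I_k g)(μ_{k+1}, ·) + (δ_k g)(μ_{k+1}, x_{k+1}) q_{k+1} = g(μ_{k+1}, ·)`. -/

open Finset

theorem Fin.sum_ite_val_lt_eq_sum_castLE {M : Type*} [AddCommMonoid M] {k d : ℕ} (h : k ≤ d)
    (f : Fin d → M) :
    ∑ m : Fin d, (if (m : ℕ) < k then f m else 0) = ∑ m : Fin k, f (Fin.castLE h m) := by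
  rw [← sum_filter]
  exact (sum_nbij (Fin.castLE h) (fun m _ => by simp) (Fin.castLE_injective h).injOn
    (fun m hm => ⟨⟨m, by simpa using hm⟩, mem_univ _, rfl⟩) fun _ _ => rfl).symm

theorem stmt6_general {P Ω : Type*}
    (g : P → Ω → ℂ) (d : ℕ)
    (x : Fin d → Ω) (μ : Fin d → P) (q : Fin d → Ω → ℂ)
    (k : ℕ) (hk : k < d)
    (lam : P → Fin d → ℂ)
    -- λ(μ) solves the rank-k EIM system with matrix B^(k)_{l,m} = q_m(x_l)
    (hlam : ∀ (p : P) (l : Fin d), (l : ℕ) < k →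
      ∑ m : Fin d, (if (m : ℕ) < k then q m (x l) * lam p m else 0) = g p (x l))
    -- the residual δ_k g is nonzero at (μ_{k+1}, x_{k+1})
    (hres : g (μ ⟨k, hk⟩) (x ⟨k, hk⟩) -
      ∑ m : Fin d, (if (m : ℕ) < k then lam (μ ⟨k, hk⟩) m * q m (x ⟨k, hk⟩) else 0) ≠ 0)
    -- q_{k+1} is the normalized residual
    (hqk : ∀ y : Ω, q ⟨k, hk⟩ y =
      (g (μ ⟨k, hk⟩) y -
        ∑ m : Fin d, (if (m : ℕ) < k then lam (μ ⟨k, hk⟩) m * q m y else 0)) /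
      (g (μ ⟨k, hk⟩) (x ⟨k, hk⟩) -
        ∑ m : Fin d, (if (m : ℕ) < k then lam (μ ⟨k, hk⟩) m * q m (x ⟨k, hk⟩) else 0)))
    (Γk : Matrix (Fin k) (Fin k) ℂ)
    (hΓk : ∀ (l : Fin k) (y : Ω),
      ∑ m : Fin k, Γk l m * q (Fin.castLE hk.le m) y = g (μ (Fin.castLE hk.le l)) y)
    (κ : Fin k → ℂ)
    (hκuniq : ∀ κ' : Fin k → ℂ,
      (∀ l : Fin k, ∑ m : Fin k,
        q (Fin.castLE hk.le m) (x (Fin.castLE hk.le l)) * κ' m =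
        g (μ ⟨k, hk⟩) (x (Fin.castLE hk.le l))) → κ' = κ)
    (Γk1 : Matrix (Fin (k + 1)) (Fin (k + 1)) ℂ)
    (hG1 : ∀ l m : Fin k, Γk1 (Fin.castSucc l) (Fin.castSucc m) = Γk l m)
    (hG2 : ∀ l : Fin k, Γk1 (Fin.castSucc l) (Fin.last k) = 0)
    (hG3 : Γk1 (Fin.last k) (Fin.last k) =
      g (μ ⟨k, hk⟩) (x ⟨k, hk⟩) -
        ∑ m : Fin d, (if (m : ℕ) < k then lam (μ ⟨k, hk⟩) m * q m (x ⟨k, hk⟩) else 0))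
    (hG4 : ∀ l : Fin k, Γk1 (Fin.last k) (Fin.castSucc l) = κ l) :
    ∀ (l : Fin (k + 1)) (y : Ω),
      ∑ m : Fin (k + 1), Γk1 l m * q (Fin.castLE hk m) y = g (μ (Fin.castLE hk l)) y := by
  have hκ_eq : κ = fun m => lam (μ ⟨k, hk⟩) (Fin.castLE hk.le m) := by
    refine (hκuniq _ fun l => ?_).symm
    simpa only [Fin.sum_ite_val_lt_eq_sum_castLE hk.le] using
      hlam (μ ⟨k, hk⟩) (Fin.castLE hk.le l) l.isLt
  intro l y
  rw [Fin.sum_univ_castSucc]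
  induction l using Fin.lastCases with
  | last =>
    simp only [hG4, hG3, hκ_eq]
    change ∑ m : Fin k, _ * q (Fin.castLE hk.le m) y + _ * q ⟨k, hk⟩ y = g (μ ⟨k, hk⟩) y
    rw [hqk y, mul_div_cancel₀ _ hres,
      ← Fin.sum_ite_val_lt_eq_sum_castLE hk.le fun m => lam (μ ⟨k, hk⟩) m * q m y]
    ring
  | cast i =>
    simp only [hG1, hG2, zero_mul, add_zero]
    exact hΓk i y

/-- Inductive step of Lemma 1: given the change-of-basis matrix `Γ^(k)` at rank `k`,
the matrix `Γ^(k+1)` defined from `Γ^(k)`, the residual value and the vector `κ`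
is the change-of-basis matrix at rank `k+1`. -/
theorem stmt6 {P Ω : Type*} [Nonempty P] [Nonempty Ω]
    (g : P → Ω → ℂ) (d : ℕ)
    (x : Fin d → Ω) (μ : Fin d → P) (q : Fin d → Ω → ℂ)
    (k : ℕ) (hk1 : 1 ≤ k) (hk : k < d)
    (lam : P → Fin d → ℂ)
    -- λ(μ) solves the rank-k EIM system with matrix B^(k)_{l,m} = q_m(x_l)
    (hlam : ∀ (p : P) (l : Fin d), (l : ℕ) < k →
      ∑ m : Fin d, (if (m : ℕ) < k then q m (x l) * lam p m else 0) = g p (x l))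
    -- the residual δ_k g is nonzero at (μ_{k+1}, x_{k+1})
    (hres : g (μ ⟨k, hk⟩) (x ⟨k, hk⟩) -
      ∑ m : Fin d, (if (m : ℕ) < k then lam (μ ⟨k, hk⟩) m * q m (x ⟨k, hk⟩) else 0) ≠ 0)
    -- q_{k+1} is the normalized residual
    (hqk : ∀ y : Ω, q ⟨k, hk⟩ y =
      (g (μ ⟨k, hk⟩) y -
        ∑ m : Fin d, (if (m : ℕ) < k then lam (μ ⟨k, hk⟩) m * q m y else 0)) /
      (g (μ ⟨k, hk⟩) (x ⟨k, hk⟩) -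
        ∑ m : Fin d, (if (m : ℕ) < k then lam (μ ⟨k, hk⟩) m * q m (x ⟨k, hk⟩) else 0)))
    (Γk : Matrix (Fin k) (Fin k) ℂ)
    (hΓk : ∀ (l : Fin k) (y : Ω),
      ∑ m : Fin k, Γk l m * q (Fin.castLE hk.le m) y = g (μ (Fin.castLE hk.le l)) y)
    (κ : Fin k → ℂ)
    -- κ is the solution of Σ_m B^(k)_{l,m} κ_m = g(μ_{k+1}, x_l)
    (hκ : ∀ l : Fin k, ∑ m : Fin k,
      q (Fin.castLE hk.le m) (x (Fin.castLE hk.le l)) * κ m =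
      g (μ ⟨k, hk⟩) (x (Fin.castLE hk.le l)))
    (hκuniq : ∀ κ' : Fin k → ℂ,
      (∀ l : Fin k, ∑ m : Fin k,
        q (Fin.castLE hk.le m) (x (Fin.castLE hk.le l)) * κ' m =
        g (μ ⟨k, hk⟩) (x (Fin.castLE hk.le l))) → κ' = κ)
    (Γk1 : Matrix (Fin (k + 1)) (Fin (k + 1)) ℂ)
    (hG1 : ∀ l m : Fin k, Γk1 (Fin.castSucc l) (Fin.castSucc m) = Γk l m)
    (hG2 : ∀ l : Fin k, Γk1 (Fin.castSucc l) (Fin.last k) = 0)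
    (hG3 : Γk1 (Fin.last k) (Fin.last k) =
      g (μ ⟨k, hk⟩) (x ⟨k, hk⟩) -
        ∑ m : Fin d, (if (m : ℕ) < k then lam (μ ⟨k, hk⟩) m * q m (x ⟨k, hk⟩) else 0))
    (hG4 : ∀ l : Fin k, Γk1 (Fin.last k) (Fin.castSucc l) = κ l) :
    ∀ (l : Fin (k + 1)) (y : Ω),
      ∑ m : Fin (k + 1), Γk1 l m * q (Fin.castLE hk m) y = g (μ (Fin.castLE hk l)) y :=
  stmt6_general g d x μ q k hk lam hlam hres hqk Γk hΓk κ hκuniq Γk1 hG1 hG2 hG3 hG4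
end

section
/- Under the EIM recursion, there exists a unique matrix Γ ∈ ℂ^{d×d} such that Σ_{m=1}^d Γ_{l,m} q_m(x) = g(μ_l, x) for all 1 ≤ l ≤ d and all x ∈ Ω; this Γ is lower triangular (Γ_{l,m} = 0 for m > l), its diagonal entries are Γ_{1,1} = g(μ₁, x₁) and Γ_{k+1,k+1} = (δ_k g)(μ_{k+1}, x_{k+1}) for 1 ≤ k < d, all nonzero, and consequently Γ is invertible. -/
/-!
Unwinding the recursion, `g(μ_l, ·) = Σ_{m<l} λ_m(μ_l) q_m + (δ g)(μ_l, x_l) q_l`, so the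
coefficients form a lower triangular matrix whose diagonal holds the nonzero residuals at the
interpolation points, and it is invertible. It is unique because the `q_m` are linearly
independent: each residual vanishes at the earlier interpolation points, so the evaluation matrix
`(q_m(x_l))` is triangular with unit diagonal.
-/

open Finset Matrix

section

variable {ι Ω K : Type*} [Fintype ι] [LinearOrder ι] [Field K]

theorem Matrix.eq_of_forall_sum_mul_eq_of_triangular {q : ι → Ω → K} {x : ι → Ω}
    (hdiag : ∀ i, q i (x i) ≠ 0) (htri : ∀ ⦃i j⦄, j < i → q i (x j) = 0)
    {A B : Matrix ι ι K} (h : ∀ l y, ∑ m, A l m * q m y = ∑ m, B l m * q m y) : A = B := by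
  set E : Matrix ι ι K := of fun i j => q i (x j)
  have hE : E.IsUpperTriangular := fun _ _ hji => htri hji
  have hunit : IsUnit E := by
    rw [isUnit_iff_isUnit_det, det_of_isUpperTriangular hE]
    exact (prod_ne_zero_iff.2 fun i _ => hdiag i).isUnit
  refine hunit.mul_left_inj.1 (ext fun l j => ?_)
  simpa [E, mul_apply] using h l (x j)

namespace EIM

variable (f : ι → Ω → K) (c : ι → ι → K) (q : ι → Ω → K) (x : ι → Ω)

/-- With `f l = g(μ_l, ·)` and `c l = λ(μ_l)` the coefficients of the interpolant built from the
`q_m` with `m < l`, this is `(δ g)(μ_l, y)`; it is `g(μ_l, y)` at the first index. -/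
def residual (l : ι) (y : Ω) : K :=
  f l y - ∑ m, if m < l then c l m * q m y else 0

def gammaMatrix : Matrix ι ι K :=
  of fun l m => if m < l then c l m else if m = l then residual f c q l (x l) else 0

variable {f c q x}

theorem residual_of_isMin {l : ι} (hl : IsMin l) (y : Ω) : residual f c q l y = f l y := by
  simp [residual, hl.not_lt]

theorem basis_apply_self (hq : ∀ l y, q l y = residual f c q l y / residual f c q l (x l))
    (hres : ∀ l, residual f c q l (x l) ≠ 0) (l : ι) : q l (x l) = 1 := by
  rw [hq, div_self (hres l)]

theorem basis_apply_of_lt (hq : ∀ l y, q l y = residual f c q l y / residual f c q l (x l))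
    (hvanish : ∀ ⦃j l⦄, j < l → residual f c q l (x j) = 0) {j l : ι} (h : j < l) :
    q l (x j) = 0 := by
  rw [hq, hvanish h, zero_div]

theorem sum_gammaMatrix_mul (hq : ∀ l y, q l y = residual f c q l y / residual f c q l (x l))
    (hres : ∀ l, residual f c q l (x l) ≠ 0) (l : ι) (y : Ω) :
    ∑ m, gammaMatrix f c q x l m * q m y = f l y := by
  have hsplit : ∀ m, gammaMatrix f c q x l m * q m y =
      (if m < l then c l m * q m y else 0) +
        if l = m then residual f c q l (x l) * q l y else 0 := by
    intro m
    rcases lt_trichotomy m l with h | rfl | h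
    · simp [gammaMatrix, h, h.ne']
    · simp [gammaMatrix]
    · simp [gammaMatrix, h.not_gt, h.ne, h.ne']
  have hdiag : residual f c q l (x l) * q l y = residual f c q l y := by
    rw [hq l y, mul_div_cancel₀ _ (hres l)]
  rw [sum_congr rfl fun m _ => hsplit m, sum_add_distrib, sum_ite_eq, if_pos (mem_univ l), hdiag,
    residual, add_sub_cancel]

theorem gammaMatrix_isLowerTriangular : (gammaMatrix f c q x).IsLowerTriangular := by
  intro l m (h : l < m)
  simp [gammaMatrix, h.not_gt, h.ne']

theorem gammaMatrix_apply_self (l : ι) : gammaMatrix f c q x l l = residual f c q l (x l) := by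
  simp [gammaMatrix]

theorem isUnit_gammaMatrix (hres : ∀ l, residual f c q l (x l) ≠ 0) :
    IsUnit (gammaMatrix f c q x) := by
  rw [isUnit_iff_isUnit_det, det_of_isLowerTriangular _ gammaMatrix_isLowerTriangular]
  exact (prod_ne_zero_iff.2 fun l _ => by rw [gammaMatrix_apply_self]; exact hres l).isUnit

end EIM

end

theorem stmt7_general {P Ω : Type*}
    (g : P → Ω → ℂ) (d : ℕ) (hd : 1 ≤ d)
    (x : Fin d → Ω) (μ : Fin d → P) (q : Fin d → Ω → ℂ)
    (lam : ℕ → P → Fin d → ℂ)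
    (h0 : g (μ ⟨0, hd⟩) (x ⟨0, hd⟩) ≠ 0)
    (hq0 : ∀ y : Ω, q ⟨0, hd⟩ y = g (μ ⟨0, hd⟩) y / g (μ ⟨0, hd⟩) (x ⟨0, hd⟩))
    (hlam : ∀ k, 1 ≤ k → k < d → ∀ (p : P) (l : Fin d), (l : ℕ) < k →
      ∑ m : Fin d, (if (m : ℕ) < k then q m (x l) * lam k p m else 0) = g p (x l))
    (hres : ∀ k (hk1 : 1 ≤ k) (hk : k < d),
      g (μ ⟨k, hk⟩) (x ⟨k, hk⟩) -
        ∑ m : Fin d, (if (m : ℕ) < k then lam k (μ ⟨k, hk⟩) m * q m (x ⟨k, hk⟩) else 0) ≠ 0)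
    (hqk : ∀ k (hk1 : 1 ≤ k) (hk : k < d) (y : Ω),
      q ⟨k, hk⟩ y =
        (g (μ ⟨k, hk⟩) y -
          ∑ m : Fin d, (if (m : ℕ) < k then lam k (μ ⟨k, hk⟩) m * q m y else 0)) /
        (g (μ ⟨k, hk⟩) (x ⟨k, hk⟩) -
          ∑ m : Fin d, (if (m : ℕ) < k then lam k (μ ⟨k, hk⟩) m * q m (x ⟨k, hk⟩) else 0))) :
    (∃! Γ : Matrix (Fin d) (Fin d) ℂ,
      ∀ (l : Fin d) (y : Ω), ∑ m : Fin d, Γ l m * q m y = g (μ l) y) ∧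
    (∀ Γ : Matrix (Fin d) (Fin d) ℂ,
      (∀ (l : Fin d) (y : Ω), ∑ m : Fin d, Γ l m * q m y = g (μ l) y) →
      (∀ l m : Fin d, l < m → Γ l m = 0) ∧
      Γ ⟨0, hd⟩ ⟨0, hd⟩ = g (μ ⟨0, hd⟩) (x ⟨0, hd⟩) ∧
      (∀ k (hk1 : 1 ≤ k) (hk : k < d),
        Γ ⟨k, hk⟩ ⟨k, hk⟩ =
          g (μ ⟨k, hk⟩) (x ⟨k, hk⟩) -
            ∑ m : Fin d, (if (m : ℕ) < k then lam k (μ ⟨k, hk⟩) m * q m (x ⟨k, hk⟩) else 0)) ∧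
      (∀ m : Fin d, Γ m m ≠ 0) ∧
      IsUnit Γ) := by
  set f : Fin d → Ω → ℂ := fun l => g (μ l)
  set c : Fin d → Fin d → ℂ := fun l => lam l (μ l)
  have hmin : IsMin (⟨0, hd⟩ : Fin d) := fun m _ => Nat.zero_le m
  have hfirst {l : Fin d} (hl : ¬ 1 ≤ (l : ℕ)) : l = ⟨0, hd⟩ :=
    Fin.ext (Nat.lt_one_iff.1 (not_le.1 hl))
  have hres' : ∀ l, EIM.residual f c q l (x l) ≠ 0 := by
    intro l
    by_cases hl : 1 ≤ (l : ℕ)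
    · exact hres l hl l.2
    · rw [hfirst hl, EIM.residual_of_isMin hmin]
      exact h0
  have hq' : ∀ l y, q l y = EIM.residual f c q l y / EIM.residual f c q l (x l) := by
    intro l y
    by_cases hl : 1 ≤ (l : ℕ)
    · exact hqk l hl l.2 y
    · rw [hfirst hl, EIM.residual_of_isMin hmin, EIM.residual_of_isMin hmin]
      exact hq0 y
  have hvanish : ∀ ⦃j l : Fin d⦄, j < l → EIM.residual f c q l (x j) = 0 := by
    intro j l hjl
    have hinterp := hlam l (Nat.one_le_of_lt hjl) l.2 (μ l) j hjl
    rw [EIM.residual, sub_eq_zero]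
    refine hinterp.symm.trans (sum_congr rfl fun m _ => ?_)
    rw [mul_comm]
    rfl
  have hsum := EIM.sum_gammaMatrix_mul hq' hres'
  have huniq : ∀ Γ : Matrix (Fin d) (Fin d) ℂ,
      (∀ l y, ∑ m, Γ l m * q m y = g (μ l) y) → Γ = EIM.gammaMatrix f c q x :=
    fun Γ hΓ => eq_of_forall_sum_mul_eq_of_triangular
      (fun i => by rw [EIM.basis_apply_self hq' hres']; exact one_ne_zero)
      (fun _ _ => EIM.basis_apply_of_lt hq' hvanish) fun l y => by rw [hΓ, hsum]
  refine ⟨⟨_, hsum, huniq⟩, fun Γ hΓ => ?_⟩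
  obtain rfl := huniq Γ hΓ
  refine ⟨fun _ _ h => EIM.gammaMatrix_isLowerTriangular h, ?_,
    fun _ _ _ => EIM.gammaMatrix_apply_self _,
    fun m => by rw [EIM.gammaMatrix_apply_self]; exact hres' m, EIM.isUnit_gammaMatrix hres'⟩
  rw [EIM.gammaMatrix_apply_self, EIM.residual_of_isMin hmin]

/-- Lemma 1: under the EIM recursion there is a unique matrix `Γ` with
`Σ_m Γ_{l,m} q_m(x) = g(μ_l, x)`; it is lower triangular with nonzero diagonal entries
`Γ_{1,1} = g(μ₁,x₁)` and `Γ_{k+1,k+1} = (δ_k g)(μ_{k+1},x_{k+1})`, hence invertible. -/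
theorem stmt7 {P Ω : Type*} [Nonempty P] [Nonempty Ω]
    (g : P → Ω → ℂ) (d : ℕ) (hd : 1 ≤ d)
    (x : Fin d → Ω) (μ : Fin d → P) (q : Fin d → Ω → ℂ)
    (lam : ℕ → P → Fin d → ℂ)
    (h0 : g (μ ⟨0, hd⟩) (x ⟨0, hd⟩) ≠ 0)
    (hq0 : ∀ y : Ω, q ⟨0, hd⟩ y = g (μ ⟨0, hd⟩) y / g (μ ⟨0, hd⟩) (x ⟨0, hd⟩))
    (hlam : ∀ k, 1 ≤ k → k < d → ∀ (p : P) (l : Fin d), (l : ℕ) < k →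
      ∑ m : Fin d, (if (m : ℕ) < k then q m (x l) * lam k p m else 0) = g p (x l))
    (hres : ∀ k (hk1 : 1 ≤ k) (hk : k < d),
      g (μ ⟨k, hk⟩) (x ⟨k, hk⟩) -
        ∑ m : Fin d, (if (m : ℕ) < k then lam k (μ ⟨k, hk⟩) m * q m (x ⟨k, hk⟩) else 0) ≠ 0)
    (hqk : ∀ k (hk1 : 1 ≤ k) (hk : k < d) (y : Ω),
      q ⟨k, hk⟩ y =
        (g (μ ⟨k, hk⟩) y -
          ∑ m : Fin d, (if (m : ℕ) < k then lam k (μ ⟨k, hk⟩) m * q m y else 0)) /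
        (g (μ ⟨k, hk⟩) (x ⟨k, hk⟩) -
          ∑ m : Fin d, (if (m : ℕ) < k then lam k (μ ⟨k, hk⟩) m * q m (x ⟨k, hk⟩) else 0))) :
    (∃! Γ : Matrix (Fin d) (Fin d) ℂ,
      ∀ (l : Fin d) (y : Ω), ∑ m : Fin d, Γ l m * q m y = g (μ l) y) ∧
    (∀ Γ : Matrix (Fin d) (Fin d) ℂ,
      (∀ (l : Fin d) (y : Ω), ∑ m : Fin d, Γ l m * q m y = g (μ l) y) →
      (∀ l m : Fin d, l < m → Γ l m = 0) ∧
      Γ ⟨0, hd⟩ ⟨0, hd⟩ = g (μ ⟨0, hd⟩) (x ⟨0, hd⟩) ∧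
      (∀ k (hk1 : 1 ≤ k) (hk : k < d),
        Γ ⟨k, hk⟩ ⟨k, hk⟩ =
          g (μ ⟨k, hk⟩) (x ⟨k, hk⟩) -
            ∑ m : Fin d, (if (m : ℕ) < k then lam k (μ ⟨k, hk⟩) m * q m (x ⟨k, hk⟩) else 0)) ∧
      (∀ m : Fin d, Γ m m ≠ 0) ∧
      IsUnit Γ) :=
  stmt7_general g d hd x μ q lam h0 hq0 hlam hres hqk
end

section
/- Suppose in addition that Γ ∈ ℂ^{d×d} is an invertible matrix such that Σ_{m=1}^d Γ_{l,m} q_m(x) = g(μ_l, x) for all 1 ≤ l ≤ d and all x ∈ Ω, where μ₁,…,μ_d ∈ 𝒫 are given parameter points. Set Δ := (Γ Bᵗ)⁻¹. Then for all μ ∈ 𝒫 and x ∈ Ω, (I_d g)(μ,x) = Σ_{l=1}^d Σ_{r=1}^d Δ_{l,r} g(μ, x_l) g(μ_r, x). (Formula (12) of the paper.) -/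
/-!
With `b = (g(μ, x_l))_l` and `v = (q_m(y))_m`, the coefficient vector is `λ = B⁻¹ b`, so
`I(μ, y) = b ⬝ (B⁻¹)ᵀ v`, while the defining property of `Γ` says `(g(μ_r, y))_r = Γ v`.
The right-hand side is therefore `b ⬝ (Γ Bᵀ)⁻¹ Γ v`, and `(Γ Bᵀ)⁻¹ Γ = (Bᵀ)⁻¹ Γ⁻¹ Γ = (B⁻¹)ᵀ`.
-/

open Matrix

namespace Matrix

variable {n R : Type*} [Fintype n]

theorem sum_sum_mul_mul_eq_dotProduct_mulVec [CommSemiring R] (M : Matrix n n R)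
    (u v : n → R) : ∑ l, ∑ r, M l r * u l * v r = u ⬝ᵥ (M *ᵥ v) := by
  simp only [dotProduct, mulVec, Finset.mul_sum]
  exact Finset.sum_congr rfl fun l _ => Finset.sum_congr rfl fun r _ => by ring

variable [DecidableEq n]

theorem inv_mul_transpose_mul_cancel [CommRing R] {Γ : Matrix n n R} (hΓ : IsUnit Γ)
    (B : Matrix n n R) : (Γ * Bᵀ)⁻¹ * Γ = B⁻¹ᵀ := by
  rw [mul_inv_rev, Matrix.mul_assoc, nonsing_inv_mul Γ ((isUnit_iff_isUnit_det Γ).mp hΓ),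
    Matrix.mul_one, transpose_nonsing_inv]

theorem eq_inv_mulVec_of_mulVec_eq [CommRing R] {B : Matrix n n R} (hB : IsUnit B)
    {c b : n → R} (h : B *ᵥ c = b) : c = B⁻¹ *ᵥ b := by
  rw [← h, mulVec_mulVec, nonsing_inv_mul B ((isUnit_iff_isUnit_det B).mp hB), one_mulVec]

end Matrix

theorem stmt8_general {P Ω : Type*}
    (g : P → Ω → ℂ) (d : ℕ)
    (x : Fin d → Ω) (μ : Fin d → P) (q : Fin d → Ω → ℂ)
    (B : Matrix (Fin d) (Fin d) ℂ)
    (hBinv : IsUnit B)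
    (lam : P → Fin d → ℂ)
    (hlam : ∀ (p : P) (l : Fin d), ∑ m : Fin d, B l m * lam p m = g p (x l))
    (I : P → Ω → ℂ)
    (hI : ∀ (p : P) (y : Ω), I p y = ∑ m : Fin d, lam p m * q m y)
    (Γ : Matrix (Fin d) (Fin d) ℂ)
    (hΓ : ∀ (l : Fin d) (y : Ω), ∑ m : Fin d, Γ l m * q m y = g (μ l) y)
    (hΓinv : IsUnit Γ) :
    ∀ (p : P) (y : Ω),
      I p y = ∑ l : Fin d, ∑ r : Fin d, (Γ * Bᵀ)⁻¹ l r * g p (x l) * g (μ r) y := by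
  intro p y
  have hcoeff : lam p = B⁻¹ *ᵥ fun l => g p (x l) :=
    eq_inv_mulVec_of_mulVec_eq hBinv (funext (hlam p))
  have hsnapshots : (fun r => g (μ r) y) = Γ *ᵥ fun m => q m y :=
    funext fun r => (hΓ r y).symm
  rw [hI, sum_sum_mul_mul_eq_dotProduct_mulVec, hsnapshots, mulVec_mulVec,
    inv_mul_transpose_mul_cancel hΓinv, dotProduct_mulVec, vecMul_transpose, ← hcoeff]
  rfl

/-- Formula (12): with `Δ = (Γ Bᵗ)⁻¹`, the EIM interpolant satisfies
`(I_d g)(μ,x) = Σ_{l,r} Δ_{l,r} g(μ,x_l) g(μ_r,x)`. -/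
theorem stmt8 {P Ω : Type*} [Nonempty P] [Nonempty Ω]
    (g : P → Ω → ℂ) (d : ℕ) (hd : 1 ≤ d)
    (x : Fin d → Ω) (μ : Fin d → P) (q : Fin d → Ω → ℂ)
    (B : Matrix (Fin d) (Fin d) ℂ)
    (hB : ∀ l m : Fin d, B l m = q m (x l))
    (hBinv : IsUnit B)
    (lam : P → Fin d → ℂ)
    (hlam : ∀ (p : P) (l : Fin d), ∑ m : Fin d, B l m * lam p m = g p (x l))
    (hlamuniq : ∀ (p : P) (c : Fin d → ℂ),
      (∀ l : Fin d, ∑ m : Fin d, B l m * c m = g p (x l)) → c = lam p)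
    (I : P → Ω → ℂ)
    (hI : ∀ (p : P) (y : Ω), I p y = ∑ m : Fin d, lam p m * q m y)
    (Γ : Matrix (Fin d) (Fin d) ℂ)
    (hΓ : ∀ (l : Fin d) (y : Ω), ∑ m : Fin d, Γ l m * q m y = g (μ l) y)
    (hΓinv : IsUnit Γ) :
    ∀ (p : P) (y : Ω),
      I p y = ∑ l : Fin d, ∑ r : Fin d, (Γ * Bᵀ)⁻¹ l r * g p (x l) * g (μ r) y :=
  stmt8_general g d x μ q B hBinv lam hlam I hI Γ hΓ hΓinv
end

section
/- (Skeleton characterization; core of Remark 2.) Let 𝒫 and Ω be nonempty sets, g : 𝒫 × Ω → ℂ, d ≥ 1, x₁,…,x_d ∈ Ω, μ₁,…,μ_d ∈ 𝒫, and suppose the matrix M ∈ ℂ^{d×d} with entries M_{r,l} = g(μ_r, x_l) is invertible. Define F(μ,x) := Σ_{l=1}^d Σ_{r=1}^d (M⁻¹)_{l,r} g(μ, x_l) g(μ_r, x). Then: (a) F(μ, x_l) = g(μ, x_l) for all μ ∈ 𝒫 and 1 ≤ l ≤ d, and F(μ_r, x) = g(μ_r, x) for all x ∈ Ω and 1 ≤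 r ≤ d; (b) F is the unique function of the form (μ,x) ↦ Σ_{r=1}^d a_r(μ) g(μ_r, x) (for some a_r : 𝒫 → ℂ) satisfying F(μ,x_l) = g(μ,x_l) for all μ, l; (c) F is also the unique function of the form (μ,x) ↦ Σ_{l=1}^d b_l(x) g(μ, x_l) (for some b_l : Ω → ℂ) satisfying F(μ_r,x) = g(μ_r,x) for all r, x. In particular, the Slice-1 and Slice-2 EIM interpolants built on the same interpolation points coincide. -/
/-!
Both separated forms are linear systems with matrix `M`: for fixed `μ` the Slice-1
coefficients `a(μ)` solve `a(μ) ᵥ* M = (g(μ, x_l))_l`, and for fixed `x` the Slice-2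
coefficients `b(x)` solve `M *ᵥ b(x) = (g(μ_r, x))_r`. Invertibility of `M` makes each
solution unique, namely `a(μ) = (g(μ, x_l))_l ᵥ* M⁻¹` and `b(x) = M⁻¹ *ᵥ (g(μ_r, x))_r`,
and the double sum defining `F` is both `Σ_r a_r(μ) g(μ_r, x)` and `Σ_l b_l(x) g(μ, x_l)`.
-/

open Matrix

namespace Matrix

variable {m n R : Type*} [Fintype m] [Fintype n] [CommRing R]

theorem sum_sum_mul_mul_eq_sum_vecMul_mul (N : Matrix m n R) (u : m → R) (v : n → R) :
    ∑ i, ∑ j, N i j * u i * v j = ∑ j, (u ᵥ* N) j * v j := by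
  rw [Finset.sum_comm]
  simp only [vecMul, dotProduct, Finset.sum_mul]
  exact Finset.sum_congr rfl fun j _ => Finset.sum_congr rfl fun i _ => by ring

theorem sum_sum_mul_mul_eq_sum_mulVec_mul (N : Matrix m n R) (u : m → R) (v : n → R) :
    ∑ i, ∑ j, N i j * u i * v j = ∑ i, (N *ᵥ v) i * u i := by
  simp only [mulVec, dotProduct, Finset.sum_mul]
  exact Finset.sum_congr rfl fun i _ => Finset.sum_congr rfl fun j _ => by ring

variable [DecidableEq n] {M : Matrix n n R}

theorem vecMul_eq_iff_eq_vecMul_nonsing_inv (hM : IsUnit M) {v w : n → R} :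
    v ᵥ* M = w ↔ v = w ᵥ* M⁻¹ := by
  have hdet := (isUnit_iff_isUnit_det M).mp hM
  constructor
  · rintro rfl
    rw [vecMul_vecMul, mul_nonsing_inv M hdet, vecMul_one]
  · rintro rfl
    rw [vecMul_vecMul, nonsing_inv_mul M hdet, vecMul_one]

theorem mulVec_eq_iff_eq_nonsing_inv_mulVec (hM : IsUnit M) {v w : n → R} :
    M *ᵥ v = w ↔ v = M⁻¹ *ᵥ w := by
  have hdet := (isUnit_iff_isUnit_det M).mp hM
  constructor
  · rintro rfl
    rw [mulVec_mulVec, nonsing_inv_mul M hdet, one_mulVec]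
  · rintro rfl
    rw [mulVec_mulVec, mul_nonsing_inv M hdet, one_mulVec]

end Matrix

section Skeleton

variable {ι R P Ω : Type*} [Fintype ι] [DecidableEq ι] [CommRing R]
  {g : P → Ω → R} {x : ι → Ω} {μ : ι → P} {M : Matrix ι ι R}

theorem sum_mul_eq_at_points_iff (hM : ∀ r l, M r l = g (μ r) (x l)) (hMinv : IsUnit M)
    (a : ι → R) (p : P) :
    (∀ l, ∑ r, a r * g (μ r) (x l) = g p (x l)) ↔ a = (fun l => g p (x l)) ᵥ* M⁻¹ := by
  rw [← vecMul_eq_iff_eq_vecMul_nonsing_inv hMinv, funext_iff]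
  simp only [vecMul, dotProduct, hM]

theorem sum_mul_eq_at_params_iff (hM : ∀ r l, M r l = g (μ r) (x l)) (hMinv : IsUnit M)
    (b : ι → R) (y : Ω) :
    (∀ r, ∑ l, b l * g (μ r) (x l) = g (μ r) y) ↔ b = M⁻¹ *ᵥ fun r => g (μ r) y := by
  rw [← mulVec_eq_iff_eq_nonsing_inv_mulVec hMinv, funext_iff]
  simp only [mulVec, dotProduct, hM, mul_comm]

end Skeleton

theorem stmt16_general {P Ω : Type*}
    (g : P → Ω → ℂ) (d : ℕ)
    (x : Fin d → Ω) (μ : Fin d → P)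
    (M : Matrix (Fin d) (Fin d) ℂ)
    (hM : ∀ r l : Fin d, M r l = g (μ r) (x l))
    (hMinv : IsUnit M)
    (F : P → Ω → ℂ)
    (hF : ∀ (p : P) (y : Ω),
      F p y = ∑ l : Fin d, ∑ r : Fin d, M⁻¹ l r * g p (x l) * g (μ r) y) :
    -- (a) interpolation on the cross
    (∀ (p : P) (l : Fin d), F p (x l) = g p (x l)) ∧
    (∀ (r : Fin d) (y : Ω), F (μ r) y = g (μ r) y) ∧
    -- (b) F is the unique function of the form Σ_r a_r(μ) g(μ_r,·) interpolating at the x_l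
    (∃ a : Fin d → P → ℂ, ∀ (p : P) (y : Ω), F p y = ∑ r : Fin d, a r p * g (μ r) y) ∧
    (∀ a : Fin d → P → ℂ,
      (∀ (p : P) (l : Fin d), ∑ r : Fin d, a r p * g (μ r) (x l) = g p (x l)) →
      ∀ (p : P) (y : Ω), ∑ r : Fin d, a r p * g (μ r) y = F p y) ∧
    -- (c) F is the unique function of the form Σ_l b_l(x) g(·,x_l) interpolating at the μ_r
    (∃ b : Fin d → Ω → ℂ, ∀ (p : P) (y : Ω), F p y = ∑ l : Fin d, b l y * g p (x l)) ∧
    (∀ b : Fin d → Ω → ℂ,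
      (∀ (r : Fin d) (y : Ω), ∑ l : Fin d, b l y * g (μ r) (x l) = g (μ r) y) →
      ∀ (p : P) (y : Ω), ∑ l : Fin d, b l y * g p (x l) = F p y) := by
  set a : Fin d → P → ℂ := fun r p => ((fun l => g p (x l)) ᵥ* M⁻¹) r
  set b : Fin d → Ω → ℂ := fun l y => (M⁻¹ *ᵥ fun r => g (μ r) y) l
  have hFa : ∀ p y, F p y = ∑ r, a r p * g (μ r) y := fun p y =>
    (hF p y).trans (sum_sum_mul_mul_eq_sum_vecMul_mul _ _ _)
  have hFb : ∀ p y, F p y = ∑ l, b l y * g p (x l) := fun p y =>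
    (hF p y).trans (sum_sum_mul_mul_eq_sum_mulVec_mul _ _ _)
  refine ⟨fun p l => ?_, fun r y => ?_, ⟨a, hFa⟩, fun a' ha' p y => ?_, ⟨b, hFb⟩,
    fun b' hb' p y => ?_⟩
  · rw [hFa]
    exact (sum_mul_eq_at_points_iff hM hMinv _ p).2 rfl l
  · rw [hFb]
    exact (sum_mul_eq_at_params_iff hM hMinv _ y).2 rfl r
  · have ha'p := (sum_mul_eq_at_points_iff hM hMinv (a' · p) p).1 (ha' p)
    rw [hFa]
    exact Finset.sum_congr rfl fun r _ => by rw [congrFun ha'p r]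
  · have hb'y := (sum_mul_eq_at_params_iff hM hMinv (b' · y) y).1 (hb' · y)
    rw [hFb]
    exact Finset.sum_congr rfl fun l _ => by rw [congrFun hb'y l]

/-- Skeleton characterization (core of Remark 2): with `M_{r,l} = g(μ_r,x_l)` invertible and
`F(μ,x) = Σ_{l,r} (M⁻¹)_{l,r} g(μ,x_l) g(μ_r,x)`, the function `F` interpolates `g` on the
cross `{x_l} ∪ {μ_r}`, and it is the unique function of either separated form with the
corresponding interpolation property; hence the Slice-1 and Slice-2 interpolants coincide. -/
theorem stmt16 {P Ω : Type*} [Nonempty P] [Nonempty Ω]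
    (g : P → Ω → ℂ) (d : ℕ) (hd : 1 ≤ d)
    (x : Fin d → Ω) (μ : Fin d → P)
    (M : Matrix (Fin d) (Fin d) ℂ)
    (hM : ∀ r l : Fin d, M r l = g (μ r) (x l))
    (hMinv : IsUnit M)
    (F : P → Ω → ℂ)
    (hF : ∀ (p : P) (y : Ω),
      F p y = ∑ l : Fin d, ∑ r : Fin d, M⁻¹ l r * g p (x l) * g (μ r) y) :
    -- (a) interpolation on the cross
    (∀ (p : P) (l : Fin d), F p (x l) = g p (x l)) ∧
    (∀ (r : Fin d) (y : Ω), F (μ r) y = g (μ r) y) ∧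
    -- (b) F is the unique function of the form Σ_r a_r(μ) g(μ_r,·) interpolating at the x_l
    (∃ a : Fin d → P → ℂ, ∀ (p : P) (y : Ω), F p y = ∑ r : Fin d, a r p * g (μ r) y) ∧
    (∀ a : Fin d → P → ℂ,
      (∀ (p : P) (l : Fin d), ∑ r : Fin d, a r p * g (μ r) (x l) = g p (x l)) →
      ∀ (p : P) (y : Ω), ∑ r : Fin d, a r p * g (μ r) y = F p y) ∧
    -- (c) F is the unique function of the form Σ_l b_l(x) g(·,x_l) interpolating at the μ_r
    (∃ b : Fin d → Ω → ℂ, ∀ (p : P) (y : Ω), F p y = ∑ l : Fin d, b l y * g p (x l)) ∧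
    (∀ b : Fin d → Ω → ℂ,
      (∀ (r : Fin d) (y : Ω), ∑ l : Fin d, b l y * g (μ r) (x l) = g (μ r) y) →
      ∀ (p : P) (y : Ω), ∑ l : Fin d, b l y * g p (x l) = F p y) :=
  stmt16_general g d x μ M hM hMinv F hF
end
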